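/- arXiv:1807.02156 — 2 statements merged into one kernel-verified Lean document; each statement's English description precedes it below -/
import Mathlib

section
/- Let n ≥ 1 and let A be a set partition of {1,…,n}. Then Σ_{v=1}^{n} depth(v) = Σ_{B block of A} (max B − min B + 1) − n; that is, the sum of the depths of the vertices equals the dimension exponent of A. -/
open Finset
open scoped Classical

noncomputable section

/-- The arcs of a set partition `A` of `{1,…,n}`: pairs `(i,j)` with `i < j`, `i` and `j` in
the same block, and no element of that block strictly between `i` and `j`. -/
noncomputable def arcs (n : ℕ) (A : Finpartition (Finset.Icc 1 n)) : Finset (ℕ × ℕ) :=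
  (Finset.Icc 1 n ×ˢ Finset.Icc 1 n).filter
    (fun p => p.1 < p.2 ∧ ∃ B ∈ A.parts, p.1 ∈ B ∧ p.2 ∈ B ∧
      ∀ k ∈ B, ¬ (p.1 < k ∧ k < p.2))

/-- The depth of a vertex `v`: the number of arcs `(i,j)` with `i < v < j`. -/
noncomputable def vertexDepth (n : ℕ) (A : Finpartition (Finset.Icc 1 n)) (v : ℕ) : ℕ :=
  ((arcs n A).filter (fun p => p.1 < v ∧ v < p.2)).card

/-- The depth of an arc `α = (u,v)`: the number of arcs `(i,j)` with `i < u < v < j`. -/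
noncomputable def arcDepth (n : ℕ) (A : Finpartition (Finset.Icc 1 n)) (α : ℕ × ℕ) : ℕ :=
  ((arcs n A).filter (fun p => p.1 < α.1 ∧ α.2 < p.2)).card

/-- The depth index `t(A) = Σ_{i=1}^m (n−i) − Σ_{v=1}^n depth(v) + Σ_{α} depth(α)`,
where `m` is the number of arcs of `A`. -/
noncomputable def depthIndex (n : ℕ) (A : Finpartition (Finset.Icc 1 n)) : ℤ :=
  (∑ i ∈ Finset.Icc 1 (arcs n A).card, ((n : ℤ) - (i : ℤ)))
    - ∑ v ∈ Finset.Icc 1 n, (vertexDepth n A v : ℤ)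
    + ∑ α ∈ arcs n A, (arcDepth n A α : ℤ)

/-- The intertwining number of `A`: the sum over all unordered pairs of distinct blocks
`{B, C}` of the number of pairs `(b,c) ∈ B × C` with no element of `B ∪ C` strictly between
them.  Since distinct blocks are disjoint, this equals the number of pairs `(x,y)` with
`x < y` lying in different blocks `B ∋ x`, `C ∋ y` such that no element of `B ∪ C` lies
strictly between `x` and `y`. -/
noncomputable def inumber (n : ℕ) (A : Finpartition (Finset.Icc 1 n)) : ℕ :=
  ((Finset.Icc 1 n ×ˢ Finset.Icc 1 n).filter
    (fun p => p.1 < p.2 ∧ ∃ B ∈ A.parts, ∃ C ∈ A.parts, B ≠ C ∧ p.1 ∈ B ∧ p.2 ∈ C ∧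
      ∀ k ∈ B ∪ C, ¬ (p.1 < k ∧ k < p.2))).card

/-- `u` and `v` lie in the same block of `A`. -/
def sameBlock (n : ℕ) (A : Finpartition (Finset.Icc 1 n)) (u v : ℕ) : Prop :=
  ∃ B ∈ A.parts, u ∈ B ∧ v ∈ B

/-- The partner of `v`: `0` if `v` is the minimum of its block, and otherwise the largest
element of the block of `v` smaller than `v`. -/
noncomputable def partner (n : ℕ) (A : Finpartition (Finset.Icc 1 n)) (v : ℕ) : ℕ :=
  ((Finset.Icc 1 n).filter (fun u => u < v ∧ sameBlock n A u v)).sup id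

/-- The partial depth index `t_v(A) = u + #{arcs (i,j) : u < i < j < v}`, where `u` is the
partner of `v`. -/
noncomputable def partialDepthIndex (n : ℕ) (A : Finpartition (Finset.Icc 1 n)) (v : ℕ) : ℕ :=
  partner n A v +
    ((arcs n A).filter (fun p => partner n A v < p.1 ∧ p.2 < v)).card

/-- The partial intertwining number `i_v(A)`: the number of `i` with `u < i < v` (where `u`
is the partner of `v`) such that `i` has no successor in its block, or the successor of `i`
in its block is greater than `v`; i.e. every element of the block of `i` larger than `i`
is larger than `v`. -/
noncomputable def partialInumber (n : ℕ) (A : Finpartition (Finset.Icc 1 n)) (v : ℕ) : ℕ :=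
  ((Finset.Icc 1 n).filter
    (fun i => partner n A v < i ∧ i < v ∧
      ∀ j, sameBlock n A i j → i < j → v < j)).card

/-- The adjacency matrix of `A`: the `n × n` rational matrix whose `(i,j)` entry is `1` if
`(i+1, j+1)` is an arc of `A` (indices shifted from `Fin n` to `{1,…,n}`) and `0` otherwise. -/
noncomputable def adjMatrix (n : ℕ) (A : Finpartition (Finset.Icc 1 n)) :
    Matrix (Fin n) (Fin n) ℚ :=
  fun i j => if ((i : ℕ) + 1, (j : ℕ) + 1) ∈ arcs n A then 1 else 0

/-- The rank-control matrix entry `r_{i,j}` of an `n × n` matrix `M`: the rank of the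
submatrix of `M` consisting of rows `{i, i+1, …, n}` and columns `{1, …, j}`
(in 1-based indexing). -/
noncomputable def rankControl (n : ℕ) (M : Matrix (Fin n) (Fin n) ℚ) (i j : ℕ) : ℕ :=
  (M.submatrix (fun k : {k : Fin n // i ≤ (k : ℕ) + 1} => (k : Fin n))
               (fun l : {l : Fin n // (l : ℕ) + 1 ≤ j} => (l : Fin n))).rank

end

/-! Inside a block `B`, the open intervals spanned by its arcs are disjoint and fill up exactly
`Icc (min B) (max B) \ B`. Hence the depths of the vertices, counted arc by arc, contribute
`(max B - min B + 1) - #B` per block, and the block sizes add up to `n`. -/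

section ConsecutivePairs

variable {α : Type*} [LinearOrder α]

def consecutivePairs (s : Finset α) : Finset (α × α) :=
  (s ×ˢ s).filter fun p => p.1 < p.2 ∧ ∀ k ∈ s, ¬(p.1 < k ∧ k < p.2)

theorem mem_consecutivePairs {s : Finset α} {p : α × α} :
    p ∈ consecutivePairs s ↔
      p.1 ∈ s ∧ p.2 ∈ s ∧ p.1 < p.2 ∧ ∀ k ∈ s, ¬(p.1 < k ∧ k < p.2) := by
  simp only [consecutivePairs, mem_filter, mem_product, and_assoc]

theorem disjoint_consecutivePairs {s t : Finset α} (h : Disjoint s t) :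
    Disjoint (consecutivePairs s) (consecutivePairs t) := by
  refine disjoint_left.2 fun p hs ht => ?_
  exact disjoint_left.1 h (mem_consecutivePairs.1 hs).1 (mem_consecutivePairs.1 ht).1

variable [LocallyFiniteOrder α]

theorem pairwiseDisjoint_Ioo_consecutivePairs (s : Finset α) :
    (consecutivePairs s : Set (α × α)).PairwiseDisjoint fun p => Ioo p.1 p.2 := by
  intro p hp q hq hpq
  rw [Function.onFun, disjoint_left]
  intro v hvp hvq
  obtain ⟨hp₁, hp₂, -, hp⟩ := mem_consecutivePairs.1 hp
  obtain ⟨hq₁, hq₂, -, hq⟩ := mem_consecutivePairs.1 hq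
  rw [mem_Ioo] at hvp hvq
  -- an endpoint of one arc strictly inside the other would contradict consecutiveness
  have h₁ : p.1 = q.1 := le_antisymm
    (not_lt.1 fun h => hq p.1 hp₁ ⟨h, hvp.1.trans hvq.2⟩)
    (not_lt.1 fun h => hp q.1 hq₁ ⟨h, hvq.1.trans hvp.2⟩)
  have h₂ : p.2 = q.2 := le_antisymm
    (not_lt.1 fun h => hp q.2 hq₂ ⟨hvp.1.trans hvq.2, h⟩)
    (not_lt.1 fun h => hq p.2 hp₂ ⟨hvq.1.trans hvp.2, h⟩)
  exact hpq (Prod.ext h₁ h₂)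

theorem biUnion_Ioo_consecutivePairs {s : Finset α} (hs : s.Nonempty) :
    (consecutivePairs s).biUnion (fun p => Ioo p.1 p.2) = Icc (s.min' hs) (s.max' hs) \ s := by
  ext v
  simp only [mem_biUnion, mem_sdiff, mem_Icc, mem_Ioo]
  constructor
  · rintro ⟨p, hp, hp₁v, hvp₂⟩
    obtain ⟨hp₁, hp₂, -, hp⟩ := mem_consecutivePairs.1 hp
    exact ⟨⟨(s.min'_le _ hp₁).trans hp₁v.le, hvp₂.le.trans (s.le_max' _ hp₂)⟩,
      fun hv => hp v hv ⟨hp₁v, hvp₂⟩⟩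
  · rintro ⟨⟨hminv, hvmax⟩, hv⟩
    have hbelow : (s.filter (· < v)).Nonempty :=
      ⟨s.min' hs, mem_filter.2 ⟨s.min'_mem hs, hminv.lt_of_ne fun h => hv (h ▸ s.min'_mem hs)⟩⟩
    have habove : (s.filter (v < ·)).Nonempty :=
      ⟨s.max' hs, mem_filter.2 ⟨s.max'_mem hs, hvmax.lt_of_ne fun h => hv (h ▸ s.max'_mem hs)⟩⟩
    obtain ⟨hpred, hpredv⟩ := mem_filter.1 ((s.filter (· < v)).max'_mem hbelow)
    obtain ⟨hsucc, hvsucc⟩ := mem_filter.1 ((s.filter (v < ·)).min'_mem habove)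
    refine ⟨((s.filter (· < v)).max' hbelow, (s.filter (v < ·)).min' habove),
      mem_consecutivePairs.2 ⟨hpred, hsucc, hpredv.trans hvsucc, ?_⟩, hpredv, hvsucc⟩
    rintro k hk ⟨hpredk, hksucc⟩
    rcases lt_trichotomy k v with hkv | rfl | hvk
    · exact (le_max' _ k (mem_filter.2 ⟨hk, hkv⟩)).not_gt hpredk
    · exact hv hk
    · exact (min'_le _ k (mem_filter.2 ⟨hk, hvk⟩)).not_gt hksucc

theorem sum_card_Ioo_consecutivePairs_add_card {s : Finset α} (hs : s.Nonempty) :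
    ∑ p ∈ consecutivePairs s, #(Ioo p.1 p.2) + #s = #(Icc (s.min' hs) (s.max' hs)) := by
  rw [← card_biUnion (pairwiseDisjoint_Ioo_consecutivePairs s), biUnion_Ioo_consecutivePairs hs]
  exact card_sdiff_add_card_eq_card fun v hv => mem_Icc.2 ⟨s.min'_le v hv, s.le_max' v hv⟩

end ConsecutivePairs

section Arcs

variable {n : ℕ} {A : Finpartition (Icc 1 n)}

theorem arcs_eq_biUnion_consecutivePairs : arcs n A = A.parts.biUnion consecutivePairs := by
  ext p
  simp only [arcs, mem_filter, mem_product, mem_biUnion, mem_consecutivePairs]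
  constructor
  · rintro ⟨-, hlt, B, hB, h₁, h₂, hB'⟩
    exact ⟨B, hB, h₁, h₂, hlt, hB'⟩
  · rintro ⟨B, hB, h₁, h₂, hlt, hB'⟩
    exact ⟨⟨A.le hB h₁, A.le hB h₂⟩, hlt, B, hB, h₁, h₂, hB'⟩

theorem sum_vertexDepth_eq_sum_card_Ioo :
    ∑ v ∈ Icc 1 n, vertexDepth n A v = ∑ p ∈ arcs n A, #(Ioo p.1 p.2) := by
  simp only [vertexDepth, card_filter]
  rw [sum_comm]
  refine sum_congr rfl fun p hp => ?_
  obtain ⟨hp₁, hp₂⟩ := mem_product.1 (mem_filter.1 hp).1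
  rw [← card_filter]
  congr 1
  ext v
  simp only [mem_filter, mem_Icc, mem_Ioo] at hp₁ hp₂ ⊢
  omega

end Arcs

theorem sum_vertexDepth_eq_dimension_exponent_general (n : ℕ)
    (A : Finpartition (Finset.Icc 1 n)) :
    ∑ v ∈ Finset.Icc 1 n, vertexDepth n A v =
      (∑ B ∈ A.parts.attach,
        ((B : Finset ℕ).max' (A.nonempty_of_mem_parts B.2) -
          (B : Finset ℕ).min' (A.nonempty_of_mem_parts B.2) + 1)) - n := by
  have hblocks : (A.parts : Set (Finset ℕ)).PairwiseDisjoint consecutivePairs :=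
    fun B hB C hC hBC => disjoint_consecutivePairs (A.disjoint hB hC hBC)
  suffices ∑ v ∈ Icc 1 n, vertexDepth n A v + n = ∑ B ∈ A.parts.attach,
      ((B : Finset ℕ).max' (A.nonempty_of_mem_parts B.2) -
        (B : Finset ℕ).min' (A.nonempty_of_mem_parts B.2) + 1) by omega
  calc ∑ v ∈ Icc 1 n, vertexDepth n A v + n
      = ∑ B ∈ A.parts, (∑ p ∈ consecutivePairs B, #(Ioo p.1 p.2) + #B) := by
        rw [sum_vertexDepth_eq_sum_card_Ioo, arcs_eq_biUnion_consecutivePairs,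
          sum_biUnion hblocks, sum_add_distrib, A.sum_card_parts, Nat.card_Icc,
          Nat.add_sub_cancel]
    _ = _ := by
        rw [← sum_attach]
        refine sum_congr rfl fun B _ => ?_
        have hB := A.nonempty_of_mem_parts B.2
        rw [sum_card_Ioo_consecutivePairs_add_card hB, Nat.card_Icc]
        have := min'_le_max' _ hB
        omega

/-- For `n ≥ 1` and a set partition `A` of `{1,…,n}`, the sum of the
depths of the vertices equals the dimension exponent of `A`:
`Σ_{v=1}^n depth(v) = Σ_{B block of A} (max B − min B + 1) − n`. -/
theorem sum_vertexDepth_eq_dimension_exponent (n : ℕ) (hn : 1 ≤ n)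
    (A : Finpartition (Finset.Icc 1 n)) :
    ∑ v ∈ Finset.Icc 1 n, vertexDepth n A v =
      (∑ B ∈ A.parts.attach,
        ((B : Finset ℕ).max' (A.nonempty_of_mem_parts B.2) -
          (B : Finset ℕ).min' (A.nonempty_of_mem_parts B.2) + 1)) - n :=
  sum_vertexDepth_eq_dimension_exponent_general n A
end

section
/- Let n ≥ 1 and 1 ≤ k ≤ n. Then the generating polynomial of the intertwining number over set partitions of {1,…,n} with exactly k blocks equals the q-Stirling number: Σ_{A ∈ Π_{n,k}} q^{i(A)} = S_q(n,k) in ℤ[q]. Equivalently, Σ_{A ∈ Π_{n,k}} q^{n(n−1)/2 − t(A)} = S_q(n,k), where t(A) is the depth index of A. -/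
open Finset
open scoped Classical

/-- The `q`-Stirling numbers of the second kind `S_q(n,k) ∈ ℤ[q]`, defined by
`S_q(n,k) = q^{k−1} S_q(n−1,k−1) + [k]_q S_q(n−1,k)` for `n, k ≥ 1`, where
`[k]_q = 1 + q + ⋯ + q^{k−1}`, with `S_q(n,k) = δ_{n,k}` whenever `n = 0` or `k = 0`. -/
noncomputable def qStirling : ℕ → ℕ → Polynomial ℤ
  | 0, 0 => 1
  | 0, _ + 1 => 0
  | _ + 1, 0 => 0
  | n + 1, k + 1 =>
      Polynomial.X ^ k * qStirling n k +
        (∑ i ∈ Finset.range (k + 1), Polynomial.X ^ i) * qStirling n (k + 1)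

/-!
Removing the largest element `n + 1` from a partition of `{1,…,n+1}` with `k` blocks leaves a
partition of `{1,…,n}`, from which it is recovered either by appending `n + 1` to one of `k`
blocks `B`, or by adding `{n + 1}` as a new block to a partition with `k - 1` blocks. Since
`n + 1` is the largest element, the only new intertwined pairs are `(max C, n + 1)` for the
blocks `C` ending after `B`, resp. for all `k - 1` blocks. Ordering the blocks by their maxima,
the first case contributes `[k]_q` and the second `q ^ (k - 1)`: the recurrence of `S_q(n, k)`.

The depth index moves the other way: appending `n + 1` to `B` creates the arc `(max B, n + 1)`,
which raises `t` by `max B` plus the number of arcs starting after `max B` (read `max B = 0` for a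
new block). Every element of `(max B, n]` is either the maximum of its block or the left end of
exactly one arc, so `i + t` grows by exactly `n`, whence `i(A) + t(A) = n(n-1)/2`.
-/

theorem Finset.sum_pow_card_filter_lt {ι β R : Type*} [LinearOrder β] [CommSemiring R]
    (q : R) {s : Finset ι} {f : ι → β} (hf : Set.InjOn f s) :
    ∑ x ∈ s, q ^ #{y ∈ s | f x < f y} = ∑ i ∈ range #s, q ^ i := by
  induction s using Finset.induction_on_max_value f with
  | empty => simp
  | insert a s ha hmax ih =>
    have hlt : ∀ x ∈ s, f x < f a := fun x hx =>
      (hmax x hx).lt_of_ne fun h => ha (hf (mem_insert_of_mem hx) (mem_insert_self a s) h ▸ hx)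
    have hfilter : ∀ x ∈ s, {y ∈ insert a s | f x < f y} = insert a {y ∈ s | f x < f y} :=
      fun x hx => by rw [filter_insert, if_pos (hlt x hx)]
    have htop : {y ∈ insert a s | f a < f y} = ∅ :=
      filter_eq_empty_iff.2 fun y hy => not_lt.2 <| by
        rcases mem_insert.1 hy with rfl | hy
        exacts [le_rfl, hmax y hy]
    rw [sum_insert ha, htop, card_empty, pow_zero, card_insert_of_notMem ha, sum_range_succ',
      sum_congr rfl fun x hx => by
        rw [hfilter x hx, card_insert_of_notMem fun h => ha (mem_filter.1 h).1, pow_succ'],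
      ← mul_sum, ih (hf.mono (by simp)), mul_sum, pow_zero, add_comm]
    simp only [pow_succ']

theorem Finset.card_filter_insert_of_notMem {α : Type*} [DecidableEq α] {s : Finset α} {a : α}
    (P : α → Prop) [DecidablePred P] (ha : a ∉ s) :
    #{x ∈ insert a s | P x} = #{x ∈ s | P x} + if P a then 1 else 0 := by
  rw [filter_insert]
  split_ifs
  · exact card_insert_of_notMem fun h => ha (mem_filter.1 h).1
  · rfl

section BlockMax

def blockMax (B : Finset ℕ) : ℕ := B.sup id

@[simp]
theorem blockMax_empty : blockMax ∅ = 0 := rfl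

variable {B : Finset ℕ} {x : ℕ}

theorem le_blockMax (hx : x ∈ B) : x ≤ blockMax B := le_sup (f := id) hx

theorem blockMax_le (h : ∀ y ∈ B, y ≤ x) : blockMax B ≤ x := Finset.sup_le h

theorem blockMax_mem (h : B.Nonempty) : blockMax B ∈ B := by
  obtain ⟨_, hy, hmax⟩ := exists_mem_eq_sup B h id
  rwa [blockMax, hmax]

theorem blockMax_le_of_subset_Icc {n : ℕ} (h : B ⊆ Icc 1 n) : blockMax B ≤ n :=
  blockMax_le fun _ hy => (mem_Icc.1 (h hy)).2

end BlockMax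

section Arcs

variable {n : ℕ} {A : Finpartition (Icc 1 n)}

theorem blockMax_injOn_parts : Set.InjOn blockMax A.parts := fun _ hB _ hC h =>
  A.eq_of_mem_parts hB hC (blockMax_mem (A.nonempty_of_mem_parts hB))
    (h ▸ blockMax_mem (A.nonempty_of_mem_parts hC))

theorem blockMax_mem_Icc {B : Finset ℕ} (hB : B ∈ A.parts) : blockMax B ∈ Icc 1 n :=
  A.le hB (blockMax_mem (A.nonempty_of_mem_parts hB))

theorem mem_arcs {p : ℕ × ℕ} :
    p ∈ arcs n A ↔ p.1 < p.2 ∧ ∃ B ∈ A.parts, p.1 ∈ B ∧ p.2 ∈ B ∧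
      ∀ k ∈ B, ¬ (p.1 < k ∧ k < p.2) := by
  refine mem_filter.trans ⟨fun h => h.2, fun h => ⟨?_, h⟩⟩
  obtain ⟨-, B, hB, h1, h2, -⟩ := h
  exact mem_product.2 ⟨A.le hB h1, A.le hB h2⟩

theorem mem_Icc_of_mem_arcs {p : ℕ × ℕ} (hp : p ∈ arcs n A) :
    p.1 ∈ Icc 1 n ∧ p.2 ∈ Icc 1 n :=
  mem_product.1 (filter_subset _ _ hp)

theorem snd_le_of_mem_arcs {p : ℕ × ℕ} (hp : p ∈ arcs n A) : p.2 ≤ n :=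
  (mem_Icc.1 (mem_Icc_of_mem_arcs hp).2).2

theorem fst_injOn_arcs : Set.InjOn Prod.fst (arcs n A : Set (ℕ × ℕ)) := by
  intro p hp q hq h
  obtain ⟨hp12, B, hB, hp1, hp2, hpB⟩ := mem_arcs.1 hp
  obtain ⟨hq12, C, hC, hq1, hq2, hqC⟩ := mem_arcs.1 hq
  obtain rfl : B = C := A.eq_of_mem_parts hB hC hp1 (h ▸ hq1)
  have := hpB q.2 hq2
  have := hqC p.2 hp2
  exact Prod.ext h (by omega)

theorem exists_mem_arcs_of_lt_blockMax {B : Finset ℕ} (hB : B ∈ A.parts) {v : ℕ} (hv : v ∈ B)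
    (hlt : v < blockMax B) : ∃ w, (v, w) ∈ arcs n A := by
  have hne : {x ∈ B | v < x}.Nonempty :=
    ⟨blockMax B, mem_filter.2 ⟨blockMax_mem ⟨v, hv⟩, hlt⟩⟩
  obtain ⟨hwB, hvw⟩ := mem_filter.1 (min'_mem _ hne)
  refine ⟨_, mem_arcs.2 ⟨hvw, B, hB, hv, hwB, fun k hk ⟨hvk, hkw⟩ => ?_⟩⟩
  exact (min'_le _ k (mem_filter.2 ⟨hk, hvk⟩)).not_gt hkw

theorem blockMax_ne_fst_of_mem_arcs {B : Finset ℕ} (hB : B ∈ A.parts) {p : ℕ × ℕ}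
    (hp : p ∈ arcs n A) : blockMax B ≠ p.1 := by
  intro h
  obtain ⟨hp12, C, hC, hp1, hp2, -⟩ := mem_arcs.1 hp
  obtain rfl : B = C :=
    A.eq_of_mem_parts hB hC (blockMax_mem (A.nonempty_of_mem_parts hB)) (h ▸ hp1)
  exact (le_blockMax hp2).not_gt (h ▸ hp12)

/-- Every element of `(b, n]` is either the maximum of its block or the left end of an arc. -/
theorem card_filter_parts_add_card_filter_arcs (A : Finpartition (Icc 1 n)) (b : ℕ) :
    #{C ∈ A.parts | b < blockMax C} + #{p ∈ arcs n A | b < p.1} = n - b := by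
  have hcover : Ioc b n =
      {C ∈ A.parts | b < blockMax C}.image blockMax ∪ {p ∈ arcs n A | b < p.1}.image Prod.fst := by
    ext v
    simp only [mem_union, mem_image, mem_filter, mem_Ioc]
    constructor
    · rintro ⟨hbv, hvn⟩
      obtain ⟨B, hB, hvB⟩ := A.exists_mem (mem_Icc.2 ⟨by omega, hvn⟩)
      rcases (le_blockMax hvB).eq_or_lt with hv | hv
      · exact Or.inl ⟨B, ⟨hB, hv ▸ hbv⟩, hv.symm⟩
      · obtain ⟨w, hw⟩ := exists_mem_arcs_of_lt_blockMax hB hvB hv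
        exact Or.inr ⟨(v, w), ⟨hw, hbv⟩, rfl⟩
    · rintro (⟨C, ⟨hC, hbC⟩, rfl⟩ | ⟨p, ⟨hp, hbp⟩, rfl⟩)
      · exact ⟨hbC, (mem_Icc.1 (blockMax_mem_Icc hC)).2⟩
      · exact ⟨hbp, (mem_Icc.1 (mem_Icc_of_mem_arcs hp).1).2⟩
  have hdisj : Disjoint ({C ∈ A.parts | b < blockMax C}.image blockMax)
      ({p ∈ arcs n A | b < p.1}.image Prod.fst) := by
    simp only [disjoint_left, mem_image, mem_filter]
    rintro _ ⟨C, ⟨hC, -⟩, rfl⟩ ⟨p, ⟨hp, -⟩, hpC⟩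
    exact blockMax_ne_fst_of_mem_arcs hC hp hpC.symm
  rw [← Nat.card_Ioc, hcover, card_union_of_disjoint hdisj,
    card_image_of_injOn (blockMax_injOn_parts.mono (coe_subset.2 (filter_subset _ _))),
    card_image_of_injOn (fst_injOn_arcs.mono (coe_subset.2 (filter_subset _ _)))]

end Arcs

section Insertion

variable {n : ℕ}

theorem succ_notMem_of_mem_parts {A : Finpartition (Icc 1 n)} {C : Finset ℕ}
    (hC : C ∈ A.parts) : n + 1 ∉ C := fun h => by
  simpa using A.le hC h

/-- `B = ∅` stands for adding `{n + 1}` as a new block; `⊥` is a junk value for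
`B ∉ insert ∅ A.parts`. -/
def insertLast (A : Finpartition (Icc 1 n)) (B : Finset ℕ) : Finpartition (Icc 1 (n + 1)) :=
  if hB : B ∈ insert ∅ A.parts then
    { parts := insert (insert (n + 1) B) (A.parts.erase B)
      supIndep := by
        rw [supIndep_iff_pairwiseDisjoint, coe_insert]
        refine (A.disjoint.subset (coe_subset.2 (erase_subset _ _))).insert fun D hD _ => ?_
        obtain ⟨hDB, hD⟩ := mem_erase.1 hD
        refine disjoint_insert_left.2 ⟨succ_notMem_of_mem_parts hD, ?_⟩
        rcases mem_insert.1 hB with rfl | hB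
        · exact disjoint_empty_left _
        · exact A.disjoint hB hD (Ne.symm hDB)
      sup_parts := by
        have hsup : B ∪ (A.parts.erase B).sup id = Icc 1 n := by
          rcases mem_insert.1 hB with rfl | hB
          · rw [erase_eq_of_notMem A.empty_notMem_parts, empty_union, A.sup_parts]
          · conv_rhs => rw [← A.sup_parts, ← insert_erase hB, sup_insert]
            rfl
        rw [sup_insert, id, sup_eq_union, insert_union, hsup,
          insert_Icc_right_eq_Icc_add_one (by omega)]
      bot_notMem := fun h => (mem_insert.1 h).elim (insert_ne_empty _ _).symm
        fun h => A.bot_notMem (mem_of_mem_erase h) }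
  else ⊥

def eraseLast (A : Finpartition (Icc 1 (n + 1))) : Finpartition (Icc 1 n) :=
  (A.avoid {n + 1}).copy (by ext; simp; omega)

def lastBlock (A : Finpartition (Icc 1 (n + 1))) : Finset ℕ :=
  (A.part (n + 1)).erase (n + 1)

variable {A : Finpartition (Icc 1 n)} {B : Finset ℕ}

theorem parts_insertLast (hB : B ∈ insert ∅ A.parts) :
    (insertLast A B).parts = insert (insert (n + 1) B) (A.parts.erase B) := by
  rw [insertLast, dif_pos hB]

theorem card_parts_insertLast_empty : #(insertLast A ∅).parts = #A.parts + 1 := by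
  rw [parts_insertLast (mem_insert_self _ _), erase_eq_of_notMem A.empty_notMem_parts,
    card_insert_of_notMem fun h => succ_notMem_of_mem_parts h (mem_insert_self _ _)]

theorem card_parts_insertLast (hB : B ∈ A.parts) : #(insertLast A B).parts = #A.parts := by
  rw [parts_insertLast (mem_insert_of_mem hB), card_insert_of_notMem fun h =>
      succ_notMem_of_mem_parts (mem_of_mem_erase h) (mem_insert_self _ _),
    card_erase_add_one hB]

theorem mem_parts_eraseLast {A : Finpartition (Icc 1 (n + 1))} {C : Finset ℕ} :
    C ∈ (eraseLast A).parts ↔ ∃ D ∈ A.parts, D ≠ {n + 1} ∧ D.erase (n + 1) = C := by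
  rw [eraseLast, Finpartition.copy_parts, Finpartition.mem_avoid]
  refine exists_congr fun D => and_congr_right fun hD => ?_
  rw [← erase_eq, subset_singleton_iff, or_iff_right (A.ne_empty hD)]

theorem eraseLast_insertLast (hB : B ∈ insert ∅ A.parts) : eraseLast (insertLast A B) = A := by
  ext C
  simp only [mem_parts_eraseLast, parts_insertLast hB, exists_mem_insert, mem_erase]
  constructor
  · rintro (⟨hne, rfl⟩ | ⟨D, ⟨-, hD⟩, -, rfl⟩)
    · rcases mem_insert.1 hB with rfl | hB
      · exact absurd rfl hne
      · rwa [erase_insert (succ_notMem_of_mem_parts hB)]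
    · rwa [erase_eq_of_notMem (succ_notMem_of_mem_parts hD)]
  · intro hC
    by_cases hCB : C = B
    · subst hCB
      refine Or.inl ⟨fun h => A.ne_empty hC ?_, erase_insert (succ_notMem_of_mem_parts hC)⟩
      rw [← erase_insert (succ_notMem_of_mem_parts hC), h, erase_singleton]
    · refine Or.inr ⟨C, ⟨hCB, hC⟩, fun h => succ_notMem_of_mem_parts hC (by simp [h]),
        erase_eq_of_notMem (succ_notMem_of_mem_parts hC)⟩

theorem subset_Icc_of_mem_insert_empty (hB : B ∈ insert ∅ A.parts) : B ⊆ Icc 1 n := by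
  rcases mem_insert.1 hB with rfl | hB
  exacts [empty_subset _, A.le hB]

theorem succ_notMem_of_mem_insert_empty (hB : B ∈ insert ∅ A.parts) : n + 1 ∉ B := fun h => by
  simpa using subset_Icc_of_mem_insert_empty hB h

theorem lastBlock_insertLast (hB : B ∈ insert ∅ A.parts) : lastBlock (insertLast A B) = B := by
  have hpart : (insertLast A B).part (n + 1) = insert (n + 1) B :=
    Finpartition.part_eq_of_mem _ (by rw [parts_insertLast hB]; exact mem_insert_self _ _)
      (mem_insert_self _ _)
  rw [lastBlock, hpart, erase_insert (succ_notMem_of_mem_insert_empty hB)]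

end Insertion

section Removal

variable {n : ℕ} (A : Finpartition (Icc 1 (n + 1)))

theorem part_succ_mem_parts : A.part (n + 1) ∈ A.parts := A.part_mem.2 (by simp)

theorem succ_mem_part_succ : n + 1 ∈ A.part (n + 1) := A.mem_part_self.2 (by simp)

theorem lastBlock_mem : lastBlock A ∈ insert ∅ (eraseLast A).parts := by
  by_cases h : A.part (n + 1) = {n + 1}
  · rw [lastBlock, h, erase_singleton]
    exact mem_insert_self _ _
  · exact mem_insert_of_mem (mem_parts_eraseLast.2 ⟨_, part_succ_mem_parts A, h, rfl⟩)

theorem insertLast_eraseLast : insertLast (eraseLast A) (lastBlock A) = A := by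
  ext D
  rw [parts_insertLast (lastBlock_mem A), lastBlock, insert_erase (succ_mem_part_succ A),
    mem_insert, mem_erase, mem_parts_eraseLast]
  constructor
  · rintro (rfl | ⟨hne, D', hD', -, rfl⟩)
    · exact part_succ_mem_parts A
    · by_cases h : n + 1 ∈ D'
      · exact absurd (by rw [A.part_eq_of_mem hD' h]) hne
      · rwa [erase_eq_of_notMem h]
  · intro hD
    by_cases h : n + 1 ∈ D
    · exact Or.inl (A.part_eq_of_mem hD h).symm
    · refine Or.inr ⟨fun heq => ?_, D, hD, fun h' => h (by simp [h']), erase_eq_of_notMem h⟩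
      obtain ⟨x, hx⟩ := A.nonempty_of_mem_parts hD
      have hxD : x ∈ A.part (n + 1) := mem_of_mem_erase (heq ▸ hx)
      exact h (A.eq_of_mem_parts (part_succ_mem_parts A) hD hxD hx ▸ succ_mem_part_succ A)

end Removal

theorem sum_finpartition_Icc_succ {n : ℕ} {M : Type*} [AddCommMonoid M]
    (f : Finpartition (Icc 1 (n + 1)) → M) :
    ∑ A, f A = ∑ A : Finpartition (Icc 1 n), ∑ B ∈ insert ∅ A.parts, f (insertLast A B) := by
  rw [sum_sigma']
  refine sum_nbij' (fun A => ⟨eraseLast A, lastBlock A⟩) (fun p => insertLast p.1 p.2)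
    (fun A _ => mem_sigma.2 ⟨mem_univ _, lastBlock_mem A⟩) (fun _ _ => mem_univ _)
    (fun A _ => insertLast_eraseLast A) (fun p hp => ?_) (fun A _ => by rw [insertLast_eraseLast])
  obtain ⟨-, hB⟩ := mem_sigma.1 hp
  simp only [eraseLast_insertLast hB, lastBlock_insertLast hB]

section Intertwining

variable {n : ℕ}

def intertwiningPairs (n : ℕ) (A : Finpartition (Icc 1 n)) : Finset (ℕ × ℕ) :=
  (Icc 1 n ×ˢ Icc 1 n).filter
    (fun p => p.1 < p.2 ∧ ∃ B ∈ A.parts, ∃ C ∈ A.parts, B ≠ C ∧ p.1 ∈ B ∧ p.2 ∈ C ∧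
      ∀ k ∈ B ∪ C, ¬ (p.1 < k ∧ k < p.2))

theorem inumber_eq_card_intertwiningPairs (A : Finpartition (Icc 1 n)) :
    inumber n A = #(intertwiningPairs n A) := rfl

theorem mem_intertwiningPairs {A : Finpartition (Icc 1 n)} {p : ℕ × ℕ} :
    p ∈ intertwiningPairs n A ↔ p.1 < p.2 ∧ ∃ B ∈ A.parts, ∃ C ∈ A.parts, B ≠ C ∧ p.1 ∈ B ∧
      p.2 ∈ C ∧ ∀ k ∈ B ∪ C, ¬ (p.1 < k ∧ k < p.2) := by
  refine mem_filter.trans ⟨fun h => h.2, fun h => ⟨?_, h⟩⟩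
  obtain ⟨-, B, hB, C, hC, -, h1, h2, -⟩ := h
  exact mem_product.2 ⟨A.le hB h1, A.le hC h2⟩

theorem snd_le_of_mem_intertwiningPairs {A : Finpartition (Icc 1 n)} {p : ℕ × ℕ}
    (hp : p ∈ intertwiningPairs n A) : p.2 ≤ n :=
  (mem_Icc.1 (mem_product.1 (filter_subset _ _ hp)).2).2

theorem inumber_zero (A : Finpartition (Icc 1 0)) : inumber 0 A = 0 :=
  card_eq_zero.2 (eq_empty_of_forall_notMem fun p hp => by
    have := snd_le_of_mem_intertwiningPairs hp
    have := (mem_intertwiningPairs.1 hp).1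
    omega)

variable {A : Finpartition (Icc 1 (n + 1))}

theorem erase_mem_parts_eraseLast {D : Finset ℕ} (hD : D ∈ A.parts) {x : ℕ} (hx : x ∈ D)
    (hxn : x ≤ n) : D.erase (n + 1) ∈ (eraseLast A).parts :=
  mem_parts_eraseLast.2 ⟨D, hD, fun h => by simp [h] at hx; omega, rfl⟩

theorem mem_intertwiningPairs_eraseLast {p : ℕ × ℕ} (hp : p.2 ≤ n) :
    p ∈ intertwiningPairs n (eraseLast A) ↔ p ∈ intertwiningPairs (n + 1) A := by
  simp only [mem_intertwiningPairs]
  constructor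
  · rintro ⟨hlt, B', hB', C', hC', hne, h1, h2, hbetween⟩
    obtain ⟨B, hB, -, rfl⟩ := mem_parts_eraseLast.1 hB'
    obtain ⟨C, hC, -, rfl⟩ := mem_parts_eraseLast.1 hC'
    refine ⟨hlt, B, hB, C, hC, by rintro rfl; exact hne rfl, mem_of_mem_erase h1,
      mem_of_mem_erase h2, fun k hk hk' => ?_⟩
    have hkn : k ≠ n + 1 := by omega
    exact hbetween k (by simpa [mem_union, mem_erase, hkn] using hk) hk'
  · rintro ⟨hlt, B, hB, C, hC, hne, h1, h2, hbetween⟩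
    refine ⟨hlt, _, erase_mem_parts_eraseLast hB h1 (by omega), _,
      erase_mem_parts_eraseLast hC h2 hp, fun h => hne (A.eq_of_mem_parts hB hC h1 ?_),
      mem_erase.2 ⟨by omega, h1⟩, mem_erase.2 ⟨by omega, h2⟩,
      fun k hk => hbetween k (union_subset_union (erase_subset _ _) (erase_subset _ _) hk)⟩
    exact mem_of_mem_erase (h ▸ mem_erase.2 ⟨by omega, h1⟩)

theorem inumber_succ (A : Finpartition (Icc 1 (n + 1))) :
    inumber (n + 1) A =
      inumber n (eraseLast A) + #{p ∈ intertwiningPairs (n + 1) A | p.2 = n + 1} := by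
  have hrest : {p ∈ intertwiningPairs (n + 1) A | ¬ p.2 = n + 1} =
      intertwiningPairs n (eraseLast A) := by
    ext p
    rw [mem_filter]
    constructor
    · rintro ⟨hp, hpn⟩
      have := snd_le_of_mem_intertwiningPairs hp
      exact (mem_intertwiningPairs_eraseLast (by omega)).2 hp
    · intro hp
      have := snd_le_of_mem_intertwiningPairs hp
      exact ⟨(mem_intertwiningPairs_eraseLast this).1 hp, by omega⟩
  rw [inumber_eq_card_intertwiningPairs, inumber_eq_card_intertwiningPairs,
    ← card_filter_add_card_filter_not (fun p => p.2 = n + 1), hrest, add_comm]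

end Intertwining

section IntertwiningInsert

variable {n : ℕ} {A : Finpartition (Icc 1 n)} {B : Finset ℕ}

theorem filter_intertwiningPairs_insertLast (hB : B ∈ insert ∅ A.parts) :
    {p ∈ intertwiningPairs (n + 1) (insertLast A B) | p.2 = n + 1} =
      {C ∈ A.parts | blockMax B < blockMax C}.image fun C => (blockMax C, n + 1) := by
  ext ⟨x, y⟩
  simp only [mem_filter, mem_image, mem_intertwiningPairs, parts_insertLast hB, mem_insert,
    mem_erase, Prod.mk.injEq]
  constructor
  · rintro ⟨⟨hxy, D, hD, E, hE, hDE, hxD, hyE, hbetween⟩, rfl⟩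
    obtain rfl : E = insert (n + 1) B := hE.resolve_right fun hE =>
      succ_notMem_of_mem_parts hE.2 hyE
    obtain ⟨hDB, hD⟩ := hD.resolve_left hDE
    have hle : ∀ k ∈ D ∪ B, k ≤ x := fun k hk => by
      have hkn : k ≤ n := (mem_Icc.1 (union_subset (A.le hD)
        (subset_Icc_of_mem_insert_empty hB) hk)).2
      have := hbetween k (union_subset_union_right (subset_insert _ _) hk)
      omega
    have hx : x = blockMax D :=
      (le_blockMax hxD).antisymm (blockMax_le fun k hk => hle k (mem_union_left _ hk))
    refine ⟨D, ⟨hD, hx ▸ (Finset.sup_lt_iff (mem_Icc.1 (A.le hD hxD)).1).2 fun y hy => ?_⟩,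
      hx.symm, rfl⟩
    have hBparts : B ∈ A.parts := (mem_insert.1 hB).resolve_left (ne_empty_of_mem hy)
    refine (hle y (mem_union_right _ hy)).lt_of_ne fun hyx => hDB ?_
    exact A.eq_of_mem_parts hD hBparts hxD (hyx ▸ hy)
  · rintro ⟨C, ⟨hC, hBC⟩, rfl, rfl⟩
    have hCB : C ≠ B := by rintro rfl; exact hBC.false
    refine ⟨⟨Nat.lt_succ_of_le (blockMax_le_of_subset_Icc (A.le hC)), C, Or.inr ⟨hCB, hC⟩, _,
      Or.inl rfl, fun h => succ_notMem_of_mem_parts hC (h ▸ mem_insert_self _ _),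
      blockMax_mem (A.nonempty_of_mem_parts hC), mem_insert_self _ _,
      fun k hk ⟨hCk, hkn⟩ => ?_⟩, rfl⟩
    rcases mem_union.1 hk with hk | hk
    · exact (le_blockMax hk).not_gt hCk
    · rcases mem_insert.1 hk with rfl | hk
      · exact lt_irrefl _ hkn
      · exact (le_blockMax hk).not_gt (hBC.trans hCk)

theorem inumber_insertLast (hB : B ∈ insert ∅ A.parts) :
    inumber (n + 1) (insertLast A B) = inumber n A + #{C ∈ A.parts | blockMax B < blockMax C} := by
  rw [inumber_succ, eraseLast_insertLast hB, filter_intertwiningPairs_insertLast hB,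
    card_image_of_injOn]
  rintro C hC D hD h
  exact blockMax_injOn_parts (mem_filter.1 hC).1 (mem_filter.1 hD).1 (Prod.ext_iff.1 h).1

end IntertwiningInsert

section GeneratingFunction

open Polynomial

variable {n : ℕ}

theorem inumber_insertLast_empty (A : Finpartition (Icc 1 n)) :
    inumber (n + 1) (insertLast A ∅) = inumber n A + #A.parts := by
  rw [inumber_insertLast (mem_insert_self _ _), blockMax_empty,
    filter_true_of_mem fun C hC => show 0 < blockMax C from (mem_Icc.1 (blockMax_mem_Icc hC)).1]

theorem sum_pow_inumber_insertLast (A : Finpartition (Icc 1 n)) :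
    ∑ B ∈ A.parts, (X : ℤ[X]) ^ inumber (n + 1) (insertLast A B) =
      X ^ inumber n A * ∑ i ∈ range #A.parts, X ^ i := by
  rw [sum_congr rfl fun B hB => by rw [inumber_insertLast (mem_insert_of_mem hB), pow_add],
    ← mul_sum, sum_pow_card_filter_lt _ blockMax_injOn_parts]

theorem sum_ite_pow_inumber_insertLast (A : Finpartition (Icc 1 n)) (k : ℕ) :
    ∑ B ∈ insert ∅ A.parts, (if #(insertLast A B).parts = k + 1 then
      (X : ℤ[X]) ^ inumber (n + 1) (insertLast A B) else 0) =
    X ^ k * (if #A.parts = k then X ^ inumber n A else 0) +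
      (∑ i ∈ range (k + 1), X ^ i) * (if #A.parts = k + 1 then X ^ inumber n A else 0) := by
  rw [sum_insert A.empty_notMem_parts, card_parts_insertLast_empty, inumber_insertLast_empty,
    sum_congr rfl fun B hB => by rw [card_parts_insertLast hB], ← ite_sum_zero,
    sum_pow_inumber_insertLast]
  rcases eq_or_ne #A.parts k with h | h
  · simp [h, pow_add, mul_comm]
  · simp only [h, mul_comm, if_false, zero_add, add_left_inj]
    split_ifs with h' <;> simp [h']

theorem sum_pow_inumber_eq_qStirling (n k : ℕ) :
    ∑ A ∈ univ.filter (fun A : Finpartition (Icc 1 n) => #A.parts = k),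
      (X : ℤ[X]) ^ inumber n A = qStirling n k := by
  induction n generalizing k with
  | zero =>
    have hparts (A : Finpartition (Icc 1 0)) : A.parts = ∅ :=
      A.parts_eq_empty_iff.2 (Icc_eq_empty (by omega))
    obtain ⟨A₀⟩ := (inferInstance : Nonempty (Finpartition (Icc 1 0)))
    have huniv : (univ : Finset (Finpartition (Icc 1 0))) = {A₀} :=
      eq_singleton_iff_unique_mem.2 ⟨mem_univ _, fun A _ => Finpartition.ext (by simp [hparts])⟩
    cases k <;> simp [huniv, hparts, inumber_zero, qStirling]
  | succ n ih =>
    cases k with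
    | zero =>
      refine (sum_eq_zero fun A hA => absurd (card_eq_zero.1 (mem_filter.1 hA).2) ?_).trans rfl
      rw [Finpartition.parts_eq_empty_iff]
      exact (nonempty_Icc.2 (by omega)).ne_empty
    | succ k =>
      rw [sum_filter, sum_finpartition_Icc_succ, sum_congr rfl fun A _ => sum_ite_pow_inumber_insertLast A k,
        sum_add_distrib,
        ← mul_sum, ← mul_sum, ← sum_filter, ← sum_filter, ih, ih]
      rfl

end GeneratingFunction

section ArcsInsert

variable {n : ℕ}

theorem mem_arcs_eraseLast {A : Finpartition (Icc 1 (n + 1))} {p : ℕ × ℕ} (hp : p.2 ≤ n) :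
    p ∈ arcs n (eraseLast A) ↔ p ∈ arcs (n + 1) A := by
  simp only [mem_arcs]
  constructor
  · rintro ⟨hlt, B', hB', h1, h2, hbetween⟩
    obtain ⟨B, hB, -, rfl⟩ := mem_parts_eraseLast.1 hB'
    refine ⟨hlt, B, hB, mem_of_mem_erase h1, mem_of_mem_erase h2, fun k hk hk' => ?_⟩
    exact hbetween k (mem_erase.2 ⟨by omega, hk⟩) hk'
  · rintro ⟨hlt, B, hB, h1, h2, hbetween⟩
    exact ⟨hlt, _, erase_mem_parts_eraseLast hB h2 hp, mem_erase.2 ⟨by omega, h1⟩,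
      mem_erase.2 ⟨by omega, h2⟩, fun k hk => hbetween k (mem_of_mem_erase hk)⟩

variable {A : Finpartition (Icc 1 n)} {B : Finset ℕ}

theorem mk_succ_mem_arcs_insertLast_iff (hB : B ∈ insert ∅ A.parts) {x : ℕ} :
    (x, n + 1) ∈ arcs (n + 1) (insertLast A B) ↔ x ∈ B ∧ blockMax B = x := by
  have hE : insert (n + 1) B ∈ (insertLast A B).parts := by
    rw [parts_insertLast hB]
    exact mem_insert_self _ _
  simp only [mem_arcs]
  constructor
  · rintro ⟨hlt, D, hD, hxD, hnD, hbetween⟩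
    obtain rfl := (insertLast A B).eq_of_mem_parts hD hE hnD (mem_insert_self _ _)
    have hxB : x ∈ B := (mem_insert.1 hxD).resolve_left (by simp at hlt; omega)
    refine ⟨hxB, (blockMax_le fun k hk => ?_).antisymm (le_blockMax hxB)⟩
    have := hbetween k (mem_insert_of_mem hk)
    have := (mem_Icc.1 (subset_Icc_of_mem_insert_empty hB hk)).2
    omega
  · rintro ⟨hxB, rfl⟩
    have hBn := (mem_Icc.1 (subset_Icc_of_mem_insert_empty hB hxB)).2
    refine ⟨by simp; omega, _, hE, mem_insert_of_mem hxB, mem_insert_self _ _, fun k hk => ?_⟩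
    rcases mem_insert.1 hk with rfl | hk
    · simp
    · exact fun h => (le_blockMax hk).not_gt h.1

theorem mem_arcs_insertLast_of_snd_le (hB : B ∈ insert ∅ A.parts) {p : ℕ × ℕ} (hp : p.2 ≤ n) :
    p ∈ arcs (n + 1) (insertLast A B) ↔ p ∈ arcs n A := by
  rw [← mem_arcs_eraseLast hp, eraseLast_insertLast hB]

theorem mem_arcs_insertLast_of_lt_snd (hB : B ∈ insert ∅ A.parts) {p : ℕ × ℕ} (hp : n < p.2) :
    p ∈ arcs (n + 1) (insertLast A B) ↔ p.2 = n + 1 ∧ p.1 ∈ B ∧ blockMax B = p.1 := by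
  constructor
  · intro h
    have hp' : p.2 = n + 1 := le_antisymm (snd_le_of_mem_arcs h) hp
    rw [← Prod.mk.eta (p := p), hp', mk_succ_mem_arcs_insertLast_iff hB] at h
    exact ⟨hp', h⟩
  · rintro ⟨hp', h⟩
    rwa [← Prod.mk.eta (p := p), hp', mk_succ_mem_arcs_insertLast_iff hB]

theorem arcs_insertLast_empty : arcs (n + 1) (insertLast A ∅) = arcs n A := by
  ext p
  rcases le_or_gt p.2 n with hp | hp
  · exact mem_arcs_insertLast_of_snd_le (mem_insert_self _ _) hp
  · rw [mem_arcs_insertLast_of_lt_snd (mem_insert_self _ _) hp]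
    exact iff_of_false (by simp) fun h => (snd_le_of_mem_arcs h).not_gt hp

theorem arcs_insertLast (hB : B ∈ A.parts) :
    arcs (n + 1) (insertLast A B) = insert (blockMax B, n + 1) (arcs n A) := by
  ext ⟨x, y⟩
  rw [mem_insert, Prod.mk.injEq]
  rcases le_or_gt y n with hy | hy
  · rw [mem_arcs_insertLast_of_snd_le (mem_insert_of_mem hB) hy]
    simp [(Nat.lt_succ_of_le hy).ne]
  · rw [mem_arcs_insertLast_of_lt_snd (mem_insert_of_mem hB) hy,
      or_iff_left fun h => (snd_le_of_mem_arcs h).not_gt hy]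
    constructor
    · rintro ⟨rfl, -, rfl⟩
      exact ⟨rfl, rfl⟩
    · rintro ⟨rfl, rfl⟩
      exact ⟨rfl, blockMax_mem (A.nonempty_of_mem_parts hB), rfl⟩

end ArcsInsert

section DepthIndex

def depthIndexOfArcs (n : ℕ) (S : Finset (ℕ × ℕ)) : ℤ :=
  (∑ i ∈ Icc 1 #S, ((n : ℤ) - i)) - ∑ v ∈ Icc 1 n, (#{p ∈ S | p.1 < v ∧ v < p.2} : ℤ)
    + ∑ α ∈ S, (#{p ∈ S | p.1 < α.1 ∧ α.2 < p.2} : ℤ)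

theorem depthIndex_eq_depthIndexOfArcs (n : ℕ) (A : Finpartition (Icc 1 n)) :
    depthIndex n A = depthIndexOfArcs n (arcs n A) := rfl

variable {n : ℕ} {S : Finset (ℕ × ℕ)}

theorem sum_Icc_natCast_succ_sub (m : ℕ) :
    ∑ i ∈ Icc 1 m, (((n + 1 : ℕ) : ℤ) - i) = ∑ i ∈ Icc 1 m, ((n : ℤ) - i) + m := by
  have hm : (m : ℤ) = ∑ _i ∈ Icc 1 m, (1 : ℤ) := by simp
  rw [hm, ← sum_add_distrib]
  exact sum_congr rfl fun i _ => by push_cast; ring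

theorem sum_card_filter_lt_lt_Icc_succ (hS : ∀ p ∈ S, p.2 ≤ n) :
    ∑ v ∈ Icc 1 (n + 1), (#{p ∈ S | p.1 < v ∧ v < p.2} : ℤ) =
      ∑ v ∈ Icc 1 n, (#{p ∈ S | p.1 < v ∧ v < p.2} : ℤ) := by
  rw [sum_Icc_succ_top (by omega), add_eq_left, Nat.cast_eq_zero, card_eq_zero,
    filter_eq_empty_iff]
  exact fun p hp h => (hS p hp).not_gt (by omega)

theorem depthIndexOfArcs_succ (hS : ∀ p ∈ S, p.2 ≤ n) :
    depthIndexOfArcs (n + 1) S = depthIndexOfArcs n S + #S := by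
  rw [depthIndexOfArcs, depthIndexOfArcs, sum_Icc_natCast_succ_sub,
    sum_card_filter_lt_lt_Icc_succ hS]
  ring

/-- Adding the arc `(b, n + 1)` deepens the vertices of `(b, n]` and the arcs starting after `b`. -/
theorem depthIndexOfArcs_succ_insert (hS : ∀ p ∈ S, p.2 ≤ n) {b : ℕ} (hb : b ≤ n) :
    depthIndexOfArcs (n + 1) (insert (b, n + 1) S) =
      depthIndexOfArcs n S + b + #{p ∈ S | b < p.1} := by
  have hbS : (b, n + 1) ∉ S := fun h => (hS _ h).not_gt (Nat.lt_succ_self n)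
  have hvertex : ∑ v ∈ Icc 1 (n + 1), (#{p ∈ insert (b, n + 1) S | p.1 < v ∧ v < p.2} : ℤ) =
      ∑ v ∈ Icc 1 n, (#{p ∈ S | p.1 < v ∧ v < p.2} : ℤ) + (n - b) := by
    rw [sum_congr rfl fun v _ => by rw [card_filter_insert_of_notMem _ hbS]]
    simp only [Nat.cast_add, sum_add_distrib,
      sum_card_filter_lt_lt_Icc_succ hS, Nat.cast_ite, Nat.cast_one, Nat.cast_zero, sum_boole]
    have hIoc : {v ∈ Icc 1 (n + 1) | b < v ∧ v < n + 1} = Ioc b n := by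
      ext
      simp only [mem_filter, mem_Icc, mem_Ioc]
      omega
    rw [hIoc, Nat.card_Ioc, Nat.cast_sub hb]
  have harc : ∑ α ∈ insert (b, n + 1) S, (#{p ∈ insert (b, n + 1) S | p.1 < α.1 ∧ α.2 < p.2} : ℤ) =
      ∑ α ∈ S, (#{p ∈ S | p.1 < α.1 ∧ α.2 < p.2} : ℤ) + #{p ∈ S | b < p.1} := by
    have hnew : #{p ∈ insert (b, n + 1) S | p.1 < b ∧ n + 1 < p.2} = 0 := by
      refine card_eq_zero.2 (filter_eq_empty_iff.2 fun p hp h => ?_)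
      rcases mem_insert.1 hp with rfl | hp
      exacts [lt_irrefl _ h.1, (hS p hp).not_gt (by omega)]
    have hold : ∀ α ∈ S, #{p ∈ insert (b, n + 1) S | p.1 < α.1 ∧ α.2 < p.2} =
        #{p ∈ S | p.1 < α.1 ∧ α.2 < p.2} + if b < α.1 then 1 else 0 := fun α hα => by
      rw [card_filter_insert_of_notMem _ hbS]
      have := hS α hα
      simp only [Nat.lt_succ_of_le this, and_true]
    rw [sum_insert hbS, hnew, sum_congr rfl fun α hα => by rw [hold α hα]]
    push_cast
    rw [sum_add_distrib, sum_boole, zero_add]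
  rw [depthIndexOfArcs, depthIndexOfArcs, card_insert_of_notMem hbS, sum_Icc_succ_top (by omega),
    sum_Icc_natCast_succ_sub, hvertex, harc]
  push_cast
  ring

end DepthIndex

section InumberAddDepthIndex

variable {n : ℕ} {A : Finpartition (Icc 1 n)} {B : Finset ℕ}

theorem depthIndex_insertLast (hB : B ∈ insert ∅ A.parts) :
    depthIndex (n + 1) (insertLast A B) =
      depthIndex n A + blockMax B + #{p ∈ arcs n A | blockMax B < p.1} := by
  have hS : ∀ p ∈ arcs n A, p.2 ≤ n := fun _ => snd_le_of_mem_arcs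
  rw [depthIndex_eq_depthIndexOfArcs, depthIndex_eq_depthIndexOfArcs]
  rcases mem_insert.1 hB with rfl | hB
  · rw [arcs_insertLast_empty, depthIndexOfArcs_succ hS, blockMax_empty, filter_true_of_mem
      fun p hp => show 0 < p.1 from (mem_Icc.1 (mem_Icc_of_mem_arcs hp).1).1]
    push_cast
    ring
  · rw [arcs_insertLast hB, depthIndexOfArcs_succ_insert hS (blockMax_le_of_subset_Icc (A.le hB))]

theorem inumber_add_depthIndex (n : ℕ) (A : Finpartition (Icc 1 n)) :
    (inumber n A : ℤ) + depthIndex n A = (n * (n - 1) / 2 : ℕ) := by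
  induction n with
  | zero =>
    have harcs : arcs 0 A = ∅ := eq_empty_of_forall_notMem fun p hp => by
      have := snd_le_of_mem_arcs hp
      have := (mem_arcs.1 hp).1
      omega
    rw [inumber_zero, depthIndex_eq_depthIndexOfArcs, harcs]
    rfl
  | succ n ih =>
    have hB := lastBlock_mem A
    have hcount := card_filter_parts_add_card_filter_arcs (eraseLast A) (blockMax (lastBlock A))
    have hle := blockMax_le_of_subset_Icc (subset_Icc_of_mem_insert_empty hB)
    have hind := ih (eraseLast A)
    rw [← insertLast_eraseLast A, inumber_insertLast hB, depthIndex_insertLast hB,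
      Nat.triangle_succ]
    push_cast
    omega

end InumberAddDepthIndex

theorem sum_inumber_eq_qStirling_general (n k : ℕ) :
    (∑ A ∈ Finset.univ.filter
        (fun A : Finpartition (Finset.Icc 1 n) => A.parts.card = k),
        (Polynomial.X : Polynomial ℤ) ^ inumber n A) = qStirling n k ∧
    (∑ A ∈ Finset.univ.filter
        (fun A : Finpartition (Finset.Icc 1 n) => A.parts.card = k),
        (Polynomial.X : Polynomial ℤ) ^
          (((n * (n - 1) / 2 : ℕ) : ℤ) - depthIndex n A).toNat) = qStirling n k := by
  refine ⟨sum_pow_inumber_eq_qStirling n k, ?_⟩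
  rw [← sum_pow_inumber_eq_qStirling n k]
  refine sum_congr rfl fun A _ => ?_
  rw [← inumber_add_depthIndex n A, add_sub_cancel_right, Int.toNat_natCast]

/-- For `n ≥ 1` and `1 ≤ k ≤ n`, the generating polynomial of the
intertwining number over set partitions of `{1,…,n}` with exactly `k` blocks equals the
`q`-Stirling number `S_q(n,k)`; equivalently,
`Σ_{A ∈ Π_{n,k}} q^{n(n−1)/2 − t(A)} = S_q(n,k)`. -/
theorem sum_inumber_eq_qStirling (n k : ℕ) (hn : 1 ≤ n) (hk : 1 ≤ k) (hkn : k ≤ n) :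
    (∑ A ∈ Finset.univ.filter
        (fun A : Finpartition (Finset.Icc 1 n) => A.parts.card = k),
        (Polynomial.X : Polynomial ℤ) ^ inumber n A) = qStirling n k ∧
    (∑ A ∈ Finset.univ.filter
        (fun A : Finpartition (Finset.Icc 1 n) => A.parts.card = k),
        (Polynomial.X : Polynomial ℤ) ^
          (((n * (n - 1) / 2 : ℕ) : ℤ) - depthIndex n A).toNat) = qStirling n k :=
  sum_inumber_eq_qStirling_general n k
end
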